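/- With the appendix construction (and Γ := n): the instance (ℙ,ℚ,Ψ) is a Yes-instance of ∀∃3CNF-SAT if and only if the constructed instance (𝕐,ℤ,ϝ,Γ) is a Yes-instance of ∀(Γ)∃CNF-SAT. (This is the correctness of the reduction proving Theorem 1 of the paper.) -/

import Mathlib

namespace Appendix

/-- Variables of the `∀∃3CNF-SAT` instance: `Sum.inl j` is `p_j ∈ ℙ`,
`Sum.inr j` is `q_j ∈ ℚ`. -/
abbrev PQ (n : ℕ) := Fin n ⊕ Fin n

/-- Variables of the constructed `∀(Γ)∃CNF-SAT` instance:
`𝕐 = {yP j, yN j}` and `ℤ = {z j} ∪ {sj j} ∪ {s}`. -/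
inductive NewVar (n : ℕ) where
  | yP : Fin n → NewVar n
  | yN : Fin n → NewVar n
  | z : Fin n → NewVar n
  | sj : Fin n → NewVar n
  | s : NewVar n
deriving DecidableEq

/-- A CNF formula, given as a list of clauses, each clause being a list of
literals (a variable with a polarity; `true` = positive literal).  An
assignment satisfies it if every clause contains a true literal. -/
def Satisfies {V : Type*} (F : List (List (V × Bool))) (a : V → Bool) : Prop :=
  ∀ C ∈ F, ∃ l ∈ C, a l.1 = l.2

/-- Translation of literals: `p_j ↦ yP j`, `¬p_j ↦ yN j` (both becoming
positive literals), `q_j ↦ z j`, `¬q_j ↦ ¬ z j`. -/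
def trLit {n : ℕ} : PQ n × Bool → NewVar n × Bool
  | (Sum.inl j, true) => (.yP j, true)
  | (Sum.inl j, false) => (.yN j, true)
  | (Sum.inr j, b) => (.z j, b)

/-- The formula `Ψ'` obtained from `Ψ` by translating every literal. -/
def Psi' {n : ℕ} (Ψ : List (List (PQ n × Bool))) : List (List (NewVar n × Bool)) :=
  Ψ.map fun C => C.map trLit

/-- The constructed formula `ϝ`: the clauses `(C'_i ∨ s)` for `i ∈ [m]`,
the clauses `(yP j ∨ ¬ sj j)` and `(yN j ∨ ¬ sj j)` for `j ∈ [n]`, and the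
clause `(¬ s ∨ sj 1 ∨ ⋯ ∨ sj n)`. -/
def digammaF {n : ℕ} (Ψ : List (List (PQ n × Bool))) : List (List (NewVar n × Bool)) :=
  (Ψ.map fun C => C.map trLit ++ [(NewVar.s, true)]) ++
  ((List.finRange n).map fun j => [(NewVar.yP j, true), (NewVar.sj j, false)]) ++
  ((List.finRange n).map fun j => [(NewVar.yN j, true), (NewVar.sj j, false)]) ++
  [(NewVar.s, false) :: (List.finRange n).map fun j => (NewVar.sj j, true)]

/-- The variable set `𝕐 = {yP j : j ∈ [n]} ∪ {yN j : j ∈ [n]}`. -/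
def Yset (n : ℕ) : Finset (NewVar n) :=
  Finset.univ.image NewVar.yP ∪ Finset.univ.image NewVar.yN

/-!
If `Y'` leaves some pair `yP j`, `yN j` free, setting `s` and `sj j` true satisfies `ϝ` outright,
as `s` satisfies every clause `C'_i ∨ s`. Otherwise, since `|Y'| ≤ n`, `Y'` holds exactly one
variable of each pair, so it encodes an assignment `p` of `ℙ` (`p j` true iff `yP j ∉ Y'`), and
with `s` false `ϝ` reduces to `Ψ(p, ·)`. Conversely, given `p`, take for `Y'` the `n` variables of
the literals false under `p`: then `s` must be false, because a true `sj j` forces both `yP j`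
and `yN j` true, and a model of `ϝ` restricts to a model of `Ψ(p, ·)`.
-/

theorem _root_.Finset.card_lt_card_of_forall_mem_or_mem {ι α : Type*} [Fintype ι]
    {f g : ι → α} (hfg : Function.Injective (Sum.elim f g)) {s : Finset α}
    (hs : ∀ i, f i ∈ s ∨ g i ∈ s) {j : ι} (hfj : f j ∈ s) (hgj : g j ∈ s) :
    Fintype.card ι < s.card := by
  classical
  set pick : ι → ι ⊕ ι := fun i => if f i ∈ s then .inl i else .inr i
  have hpick : Function.Injective pick := by
    intro i k h
    simp only [pick] at h
    split_ifs at h <;> simpa using h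
  set chosen := Sum.elim f g ∘ pick
  have hmem : ∀ i, chosen i ∈ s := fun i => by
    by_cases hi : f i ∈ s <;> simp [chosen, pick, hi, (hs i).resolve_left]
  have hgj_not : g j ∉ Finset.univ.image chosen := by
    simp only [Finset.mem_image, Finset.mem_univ, true_and, not_exists]
    intro i hi
    have := hfg (show Sum.elim f g (pick i) = Sum.elim f g (.inr j) from hi)
    by_cases hfi : f i ∈ s <;> simp_all [pick]
  calc Fintype.card ι = (Finset.univ.image chosen).card :=
        (Finset.card_image_of_injective _ (hfg.comp hpick)).symm
    _ < (insert (g j) (Finset.univ.image chosen)).card := by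
        simp [Finset.card_insert_of_notMem hgj_not]
    _ ≤ s.card := Finset.card_le_card <|
        Finset.insert_subset hgj (Finset.image_subset_iff.mpr fun i _ => hmem i)

section Satisfies

variable {V W : Type*}

theorem Satisfies.map {F : List (List (V × Bool))} {a : V → Bool}
    (hF : Satisfies F a) {b : W → Bool} {f : V × Bool → W × Bool}
    (hf : ∀ l, a l.1 = l.2 → b (f l).1 = (f l).2) :
    Satisfies (F.map (List.map f)) b := by
  simp only [Satisfies, List.forall_mem_map]
  intro C hC
  obtain ⟨l, hl, hla⟩ := hF C hC
  exact ⟨f l, List.mem_map_of_mem hl, hf l hla⟩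

theorem Satisfies.of_map {F : List (List (V × Bool))} {b : W → Bool}
    {f : V × Bool → W × Bool} (hF : Satisfies (F.map (List.map f)) b) {a : V → Bool}
    (hf : ∀ l, b (f l).1 = (f l).2 → a l.1 = l.2) :
    Satisfies F a := by
  simp only [Satisfies, List.forall_mem_map] at hF
  intro C hC
  obtain ⟨_, hl, hlb⟩ := hF C hC
  obtain ⟨l, hlC, rfl⟩ := List.mem_map.mp hl
  exact ⟨l, hlC, hf l hlb⟩

theorem satisfies_append {F G : List (List (V × Bool))} {a : V → Bool} :
    Satisfies (F ++ G) a ↔ Satisfies F a ∧ Satisfies G a :=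
  List.forall_mem_append

theorem satisfies_map_append_singleton {F : List (List (V × Bool))} {l : V × Bool}
    {a : V → Bool} :
    Satisfies (F.map (· ++ [l])) a ↔ a l.1 = l.2 ∨ Satisfies F a := by
  simp only [Satisfies, List.forall_mem_map, List.mem_append, List.mem_singleton, or_and_right,
    exists_or, exists_eq_left]
  by_cases hl : a l.1 = l.2 <;> simp [hl]

end Satisfies

section Reduction

variable {n : ℕ}

theorem satisfies_digammaF_iff {Ψ : List (List (PQ n × Bool))} {a : NewVar n → Bool} :
    Satisfies (digammaF Ψ) a ↔
      (a .s = true ∨ Satisfies (Psi' Ψ) a) ∧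
      (∀ j, a (.sj j) = true → a (.yP j) = true ∧ a (.yN j) = true) ∧
      (a .s = true → ∃ j, a (.sj j) = true) := by
  have hΨ : (Ψ.map fun C => C.map trLit ++ [(NewVar.s, true)]) =
      (Psi' Ψ).map (· ++ [(NewVar.s, true)]) := by
    simp [Psi', Function.comp_def]
  rw [digammaF, hΨ, satisfies_append, satisfies_append, satisfies_append,
    satisfies_map_append_singleton, and_assoc, and_assoc]
  refine Iff.and Iff.rfl ?_
  simp only [Satisfies, List.forall_mem_map, List.forall_mem_singleton, List.mem_finRange,
    forall_const]
  simp [forall_and, imp_iff_not_or, or_comm, and_assoc]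

theorem satisfies_psi'_of_satisfies {Ψ : List (List (PQ n × Bool))} {p q : Fin n → Bool}
    (hΨ : Satisfies Ψ (Sum.elim p q)) {a : NewVar n → Bool}
    (hP : ∀ j, p j = true → a (.yP j) = true) (hN : ∀ j, p j = false → a (.yN j) = true)
    (hz : ∀ j, a (.z j) = q j) :
    Satisfies (Psi' Ψ) a :=
  hΨ.map fun ⟨v, b⟩ hl => by rcases v with j | j <;> cases b <;> simp_all [trLit]

theorem satisfies_of_satisfies_psi' {Ψ : List (List (PQ n × Bool))} {a : NewVar n → Bool}
    (ha : Satisfies (Psi' Ψ) a) {p : Fin n → Bool}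
    (hP : ∀ j, a (.yP j) = true → p j = true) (hN : ∀ j, a (.yN j) = true → p j = false) :
    Satisfies Ψ (Sum.elim p fun j => a (.z j)) :=
  Satisfies.of_map ha fun ⟨v, b⟩ hl => by rcases v with j | j <;> cases b <;> simp_all [trLit]

def NewVar.elim {α : Type*} (yP yN z sj : Fin n → α) (s : α) : NewVar n → α
  | .yP j => yP j
  | .yN j => yN j
  | .z j => z j
  | .sj j => sj j
  | .s => s

abbrev avoiding (Y' : Finset (NewVar n)) (z sj : Fin n → Bool) (s : Bool) : NewVar n → Bool :=
  NewVar.elim (fun j => decide (.yP j ∉ Y')) (fun j => decide (.yN j ∉ Y')) z sj s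

theorem avoiding_eq_false {Y' : Finset (NewVar n)} (hY : Y' ⊆ Yset n) {v : NewVar n}
    (hv : v ∈ Y') (z sj : Fin n → Bool) (s : Bool) : avoiding Y' z sj s v = false := by
  have hvY := hY hv
  simp only [Yset, Finset.mem_union, Finset.mem_image] at hvY
  obtain ⟨j, -, rfl⟩ | ⟨j, -, rfl⟩ := hvY <;>
    simpa [NewVar.elim] using hv

theorem exists_satisfies_digammaF_of_notMem {Ψ : List (List (PQ n × Bool))}
    {Y' : Finset (NewVar n)} (hY : Y' ⊆ Yset n) {j : Fin n}
    (hP : .yP j ∉ Y') (hN : .yN j ∉ Y') :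
    ∃ a : NewVar n → Bool, (∀ v ∈ Y', a v = false) ∧ Satisfies (digammaF Ψ) a := by
  refine ⟨avoiding Y' (fun _ => false) (fun k => decide (k = j)) true,
    fun v hv => avoiding_eq_false hY hv _ _ _, satisfies_digammaF_iff.mpr ⟨?_, ?_, ?_⟩⟩
  · simp [NewVar.elim]
  · intro k hk
    obtain rfl : k = j := by simpa [NewVar.elim] using hk
    simp [NewVar.elim, hP, hN]
  · exact fun _ => ⟨j, by simp [NewVar.elim]⟩

theorem exists_satisfies_digammaF_of_forall_notMem {Ψ : List (List (PQ n × Bool))}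
    (H : ∀ p : Fin n → Bool, ∃ q : Fin n → Bool, Satisfies Ψ (Sum.elim p q))
    {Y' : Finset (NewVar n)} (hY : Y' ⊆ Yset n) (hY' : ∀ j, .yP j ∉ Y' ∨ .yN j ∉ Y') :
    ∃ a : NewVar n → Bool, (∀ v ∈ Y', a v = false) ∧ Satisfies (digammaF Ψ) a := by
  obtain ⟨q, hq⟩ := H fun j => decide (.yP j ∉ Y')
  refine ⟨avoiding Y' q (fun _ => false) false,
    fun v hv => avoiding_eq_false hY hv _ _ _, satisfies_digammaF_iff.mpr ⟨?_, ?_, ?_⟩⟩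
  · refine .inr (satisfies_psi'_of_satisfies hq (fun j hj => hj) (fun j hj => ?_) fun _ => rfl)
    simpa [NewVar.elim] using (hY' j).resolve_left (by simpa using hj)
  · simp [NewVar.elim]
  · simp [NewVar.elim]

theorem exists_free_or_forall_notMem {Y' : Finset (NewVar n)} (hcard : Y'.card ≤ n) :
    (∃ j, .yP j ∉ Y' ∧ .yN j ∉ Y') ∨ ∀ j, .yP j ∉ Y' ∨ .yN j ∉ Y' := by
  by_contra! ⟨hcover, j, hPj, hNj⟩
  have hinj : Function.Injective (Sum.elim (NewVar.yP (n := n)) NewVar.yN) := by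
    rintro (i | i) (k | k) h <;> simp_all
  have := Finset.card_lt_card_of_forall_mem_or_mem hinj
    (fun i => or_iff_not_imp_left.mpr (hcover i)) hPj hNj
  rw [Fintype.card_fin] at this
  omega

theorem satisfies_of_satisfies_digammaF {Ψ : List (List (PQ n × Bool))} {a : NewVar n → Bool}
    (ha : Satisfies (digammaF Ψ) a) {p : Fin n → Bool}
    (hP : ∀ j, p j = false → a (.yP j) = false) (hN : ∀ j, p j = true → a (.yN j) = false) :
    Satisfies Ψ (Sum.elim p fun j => a (.z j)) := by
  obtain ⟨hΨ', hsj, hs⟩ := satisfies_digammaF_iff.mp ha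
  have has : a .s = false := by
    by_contra has
    obtain ⟨j, hj⟩ := hs (by simpa using has)
    obtain ⟨hyP, hyN⟩ := hsj j hj
    cases hp : p j <;> simp_all
  refine satisfies_of_satisfies_psi' (hΨ'.resolve_left (by simp [has])) (fun j hj => ?_)
    fun j hj => ?_
  · cases hp : p j <;> simp_all
  · cases hp : p j <;> simp_all

def falseLits (p : Fin n → Bool) : Finset (NewVar n) :=
  Finset.univ.image fun j => cond (p j) (.yN j) (.yP j)

theorem falseLits_subset_Yset (p : Fin n → Bool) : falseLits p ⊆ Yset n := by
  intro v hv
  obtain ⟨j, -, rfl⟩ := Finset.mem_image.mp hv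
  cases p j <;> simp [Yset]

theorem card_falseLits_le (p : Fin n → Bool) : (falseLits p).card ≤ n :=
  Finset.card_image_le.trans_eq (Finset.card_fin n)

theorem yP_mem_falseLits {p : Fin n → Bool} {j : Fin n} (hj : p j = false) :
    .yP j ∈ falseLits p :=
  Finset.mem_image.mpr ⟨j, Finset.mem_univ j, by simp [hj]⟩

theorem yN_mem_falseLits {p : Fin n → Bool} {j : Fin n} (hj : p j = true) :
    .yN j ∈ falseLits p :=
  Finset.mem_image.mpr ⟨j, Finset.mem_univ j, by simp [hj]⟩

end Reduction

theorem stmt5_general (n : ℕ) (Ψ : List (List (PQ n × Bool)))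
    (Γ : ℕ) (hΓ : Γ = n) :
    (∀ p : Fin n → Bool, ∃ q : Fin n → Bool, Satisfies Ψ (Sum.elim p q)) ↔
    (∀ Y' ⊆ Yset n, Y'.card ≤ Γ →
      ∃ a : NewVar n → Bool, (∀ v ∈ Y', a v = false) ∧ Satisfies (digammaF Ψ) a) := by
  subst hΓ
  constructor
  · intro H Y' hY hcard
    rcases exists_free_or_forall_notMem hcard with ⟨j, hP, hN⟩ | hY'
    · exact exists_satisfies_digammaF_of_notMem hY hP hN
    · exact exists_satisfies_digammaF_of_forall_notMem H hY hY'
  · intro H p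
    obtain ⟨a, ha0, ha⟩ := H _ (falseLits_subset_Yset p) (card_falseLits_le p)
    exact ⟨_, satisfies_of_satisfies_digammaF ha (fun j hj => ha0 _ (yP_mem_falseLits hj))
      fun j hj => ha0 _ (yN_mem_falseLits hj)⟩

/-- Theorem 1 of the paper, correctness of the reduction.
Appendix construction with `Γ := n`: the instance `(ℙ,ℚ,Ψ)` is a Yes-instance
of `∀∃3CNF-SAT` if and only if the constructed instance `(𝕐,ℤ,ϝ,Γ)` is a
Yes-instance of `∀(Γ)∃CNF-SAT`. -/
theorem stmt5 (n : ℕ) (Ψ : List (List (PQ n × Bool)))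
    (h3 : ∀ C ∈ Ψ, C.length = 3) (Γ : ℕ) (hΓ : Γ = n) :
    (∀ p : Fin n → Bool, ∃ q : Fin n → Bool, Satisfies Ψ (Sum.elim p q)) ↔
    (∀ Y' ⊆ Yset n, Y'.card ≤ Γ →
      ∃ a : NewVar n → Bool, (∀ v ∈ Y', a v = false) ∧ Satisfies (digammaF Ψ) a) :=
  stmt5_general n Ψ Γ hΓ

end Appendix
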